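/- arXiv:2310.01540 — 4 statements merged into one kernel-verified Lean document; each statement's English description precedes it below -/
import Mathlib

section
/- The classical value of the Magic Square game is exactly 8/9: the maximum over all deterministic strategies (a: {0,1,2} → {0,1}^3 for Alice, b: {0,1,2} → {0,1}^3 for Bob, where Alice's outputs always have even parity and Bob's outputs always have odd parity) of the probability, over uniformly random inputs (x,y) ∈ {0,1,2} × {0,1,2}, that a(x)[y] = b(y)[x], equals 8/9. -/
/-!
Summing all entries of a perfect strategy row by row gives `0` on Alice's side and `3 = 1` on
Bob's side in `ZMod 2`, so no strategy wins on all nine input pairs; one that wins on eight is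
easy to write down.
-/

open Finset

theorem not_forall_eq_transpose_of_rowSums {ι : Type*} [Fintype ι] (hι : Odd (Fintype.card ι))
    (a b : ι → ι → ZMod 2) (ha : ∀ x, ∑ y, a x y = 0) (hb : ∀ y, ∑ x, b y x = 1) :
    ¬ ∀ x y, a x y = b y x := by
  intro hab
  have htotal : ∑ x, ∑ y, a x y = ∑ y, ∑ x, b y x := by
    rw [sum_comm]
    simp only [hab]
  simp only [ha, hb, sum_const_zero, sum_const, card_univ, nsmul_eq_mul, mul_one,
    hι.natCast_zmod_two] at htotal
  exact zero_ne_one htotal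

theorem card_filter_lt_card_univ {α : Type*} [Fintype α] (p : α → Prop) [DecidablePred p]
    {x : α} (hx : ¬ p x) : #(univ.filter p) < Fintype.card α :=
  card_lt_univ_of_notMem (by simpa using hx)

/-- The classical value of the Magic Square game is exactly `8/9`:
the set of winning probabilities (over uniform inputs in `{0,1,2} × {0,1,2}`) achievable by
deterministic strategies `a, b : Fin 3 → (Fin 3 → ZMod 2)` satisfying the parity constraints
(Alice's outputs have even parity, Bob's outputs have odd parity) has greatest element `8/9`. -/
theorem magic_square_classical_value :
    IsGreatest
      {v : ℚ | ∃ a b : Fin 3 → Fin 3 → ZMod 2,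
        (∀ x, a x 0 + a x 1 + a x 2 = 0) ∧
        (∀ y, b y 0 + b y 1 + b y 2 = 1) ∧
        v = ((Finset.univ.filter
              (fun p : Fin 3 × Fin 3 => a p.1 p.2 = b p.2 p.1)).card : ℚ) / 9}
      (8 / 9) := by
  constructor
  · refine ⟨fun x y => if x = 2 ∧ y ≠ 2 then 1 else 0, fun _ x => if x = 2 then 1 else 0,
      by decide, by decide, ?_⟩
    have hwins : #(univ.filter fun p : Fin 3 × Fin 3 =>
        (if p.1 = 2 ∧ p.2 ≠ 2 then (1 : ZMod 2) else 0) = if p.1 = 2 then 1 else 0) = 8 := by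
      decide
    rw [hwins]
    norm_num
  · rintro v ⟨a, b, ha, hb, rfl⟩
    have hlose : ∃ x y, a x y ≠ b y x := by
      simpa using not_forall_eq_transpose_of_rowSums (by decide) a b
        (by simpa [Fin.sum_univ_three] using ha) (by simpa [Fin.sum_univ_three] using hb)
    obtain ⟨x, y, hxy⟩ := hlose
    have hcard : #(univ.filter fun p : Fin 3 × Fin 3 => a p.1 p.2 = b p.2 p.1) ≤ 8 :=
      Nat.le_of_lt_succ (card_filter_lt_card_univ _ (x := (x, y)) hxy)
    rw [div_le_div_iff_of_pos_right (by norm_num)]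
    exact_mod_cast hcard
end

section
/- For every deterministic strategy in the Magic Square game satisfying the parity constraints (Alice's three output bits XOR to 0, Bob's three output bits XOR to 1), there exists at least one input pair (x,y) ∈ {0,1,2}² on which the strategy loses, i.e., a(x)[y] ≠ b(y)[x]. -/
/-! Summing the nine table entries along Alice's rows gives `0`, along Bob's columns gives
`3 = 1` in `ZMod 2`; a strategy winning everywhere would make the two sums agree. -/

open Finset

theorem card_nsmul_eq_of_rowSums_of_eq_transpose {ι R : Type*} [Fintype ι] [AddCommMonoid R]
    {a b : ι → ι → R} {r s : R} (ha : ∀ x, ∑ y, a x y = r) (hb : ∀ y, ∑ x, b y x = s)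
    (hab : ∀ x y, a x y = b y x) : Fintype.card ι • r = Fintype.card ι • s :=
  calc Fintype.card ι • r = ∑ x, ∑ y, a x y := by simp [ha]
    _ = ∑ y, ∑ x, b y x := by simp_rw [hab]; exact sum_comm
    _ = Fintype.card ι • s := by simp [hb]

/-- Every deterministic strategy for the Magic Square game satisfying the parity constraints
loses on at least one input pair: there exist `x, y` with `a x y ≠ b y x`. -/
theorem magic_square_no_perfect_strategy
    (a b : Fin 3 → Fin 3 → ZMod 2)
    (ha : ∀ x, a x 0 + a x 1 + a x 2 = 0)
    (hb : ∀ y, b y 0 + b y 1 + b y 2 = 1) :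
    ∃ x y : Fin 3, a x y ≠ b y x := by
  by_contra! hwin
  have hsums := card_nsmul_eq_of_rowSums_of_eq_transpose
    (fun x => by rw [Fin.sum_univ_three, ha x]) (fun y => by rw [Fin.sum_univ_three, hb y]) hwin
  exact absurd hsums (by decide)
end

section
/- No deterministic strategy for the Magic Square game can win on all 9 input pairs, because filling a 3×3 binary matrix whose entry (x,y) equals both a(x)[y] and b(y)[x] would require every row to have even parity and every column to have odd parity, forcing the total parity of all 9 entries to be both 0 and 1 — a contradiction. -/
theorem card_nsmul_eq_card_nsmul_of_sum_rows_of_sum_cols {R ι κ : Type*} [AddCommMonoid R]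
    [Fintype ι] [Fintype κ] (M : ι → κ → R) {r c : R}
    (hr : ∀ i, ∑ j, M i j = r) (hc : ∀ j, ∑ i, M i j = c) :
    Fintype.card ι • r = Fintype.card κ • c :=
  calc Fintype.card ι • r = ∑ i, ∑ j, M i j := by simp [hr]
    _ = ∑ j, ∑ i, M i j := Finset.sum_comm
    _ = Fintype.card κ • c := by simp [hc]

/-- There is no 3×3 matrix over `ZMod 2` in which every row has even parity and every
column has odd parity. (This is the parity obstruction behind the Magic Square game.) -/
theorem no_magic_square_matrix :
    ¬ ∃ M : Fin 3 → Fin 3 → ZMod 2,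
        (∀ x, ∑ y, M x y = 0) ∧ (∀ y, ∑ x, M x y = 1) := by
  rintro ⟨M, hr, hc⟩
  have h : (3 • 0 : ZMod 2) = 3 • 1 := by
    simpa using card_nsmul_eq_card_nsmul_of_sum_rows_of_sum_cols M hr hc
  exact absurd h (by decide)
end

section
/- In a 1D geometrically-local circuit of Toffoli gates on a line input of size n with the horizontal-cut partition, at most one gate in each layer receives input wires from both sides of the cut (i.e., from both U_i and D_i). Consequently, a depth-d such circuit can be simulated by a two-party communication protocol (Alice holding the x-inputs, Bob holding the y-inputs, with shared randomness equal to the circuit's auxiliary random bits) using O(d) bits of communication in total. -/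
/-! A model of 1D geometrically-local circuits of (Toffoli-type) fan-in-3 gates acting on
contiguous wires on a line, together with two-party communication protocols, and the
statement: each layer has at most one gate straddling the horizontal cut, and consequently a
depth-`d` circuit can be simulated with `O(d)` bits of communication. -/

/-- A gate acting on the three contiguous wires `pos`, `pos+1`, `pos+2`. -/
structure Gate where
  pos : ℕ
  fn : (ZMod 2 × ZMod 2 × ZMod 2) → (ZMod 2 × ZMod 2 × ZMod 2)

/-- The wires on which a gate acts. -/
def Gate.support (g : Gate) : Finset ℕ := {g.pos, g.pos + 1, g.pos + 2}

/-- Apply a gate to a state of the wires. -/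
def applyGate (g : Gate) (s : ℕ → ZMod 2) : ℕ → ZMod 2 := fun i =>
  if i = g.pos then (g.fn (s g.pos, s (g.pos + 1), s (g.pos + 2))).1
  else if i = g.pos + 1 then (g.fn (s g.pos, s (g.pos + 1), s (g.pos + 2))).2.1
  else if i = g.pos + 2 then (g.fn (s g.pos, s (g.pos + 1), s (g.pos + 2))).2.2
  else s i

/-- A layer of a circuit: a list of gates. -/
abbrev Layer := List Gate

def applyLayer (L : Layer) (s : ℕ → ZMod 2) : ℕ → ZMod 2 :=
  L.foldl (fun t g => applyGate g t) s

/-- Evaluate a circuit (a list of layers) on an initial state. -/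
def evalCircuit (C : List Layer) (s : ℕ → ZMod 2) : ℕ → ZMod 2 :=
  C.foldl (fun t L => applyLayer L t) s

/-- A valid layer: the gates act on pairwise disjoint sets of wires. -/
def ValidLayer (L : Layer) : Prop :=
  L.Pairwise (fun g h => Disjoint g.support h.support)

/-- A gate straddles the horizontal cut at wire `W` iff it touches wires on both sides. -/
def Straddles (W : ℕ) (g : Gate) : Prop := g.pos < W ∧ W ≤ g.pos + 2

instance (W : ℕ) : DecidablePred (Straddles W) := fun _ => instDecidableAnd

/-- Initial state on the line: Alice's `n` input bits `x` occupy wires `0..n-1`, Bob's `n`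
input bits `y` occupy wires `W..W+n-1`; all remaining wires hold the (input-independent,
geometrically non-local) shared randomness `r`. Alice holds wires `< W`, Bob wires `≥ W`. -/
def initState (n W : ℕ) (x y r : ℕ → ZMod 2) : ℕ → ZMod 2 := fun i =>
  if i < n then x i else if W ≤ i ∧ i < W + n then y (i - W) else r i

/-- A two-party communication protocol with shared randomness: in each round the designated
speaker sends one bit, computed from their own input, the shared randomness, and the
transcript so far; at the end each party produces its output from its input, the randomness
and the full transcript. -/
structure Protocol where
  rounds : ℕ
  speaker : ℕ → Bool
  nextA : (ℕ → ZMod 2) → (ℕ → ZMod 2) → List Bool → Bool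
  nextB : (ℕ → ZMod 2) → (ℕ → ZMod 2) → List Bool → Bool
  outA : (ℕ → ZMod 2) → (ℕ → ZMod 2) → List Bool → (ℕ → ZMod 2)
  outB : (ℕ → ZMod 2) → (ℕ → ZMod 2) → List Bool → (ℕ → ZMod 2)

/-- The transcript of the first `k` rounds of a protocol. -/
def transcript (P : Protocol) (x y r : ℕ → ZMod 2) : ℕ → List Bool
  | 0 => []
  | k + 1 =>
      let t := transcript P x y r k
      t ++ [if P.speaker k then P.nextA x r t else P.nextB y r t]

/-! A gate touching a wire `i < W` acts only on wires `< W + 2`, and the gates of a layer act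
on disjoint wires, so after a layer the state of the wires `< W` depends only on the state of
the wires `< W + 2` before it; symmetrically, the wires `≥ W` depend only on the wires
`≥ W - 2`. So if before each layer Alice announces wires `W - 2, W - 1` and Bob announces
wires `W, W + 1`, each party keeps the exact state of its own half: four bits per layer. -/

open Set

def bitOfBool (b : Bool) : ZMod 2 := if b then 1 else 0

def boolOfBit (v : ZMod 2) : Bool := decide (v = 1)

theorem bitOfBool_boolOfBit (v : ZMod 2) : bitOfBool (boolOfBit v) = v := by
  revert v; decide

theorem Gate.mem_support {g : Gate} {j : ℕ} :
    j ∈ g.support ↔ j = g.pos ∨ j = g.pos + 1 ∨ j = g.pos + 2 := by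
  simp [Gate.support]

theorem applyGate_apply_of_notMem {g : Gate} {j : ℕ} (hj : j ∉ g.support) (s : ℕ → ZMod 2) :
    applyGate g s j = s j := by
  simp only [Gate.mem_support, not_or] at hj
  simp [applyGate, hj.1, hj.2.1, hj.2.2]

theorem applyGate_apply_congr {g : Gate} {s s' : ℕ → ZMod 2} (hg : EqOn s s' g.support)
    {j : ℕ} (hj : s j = s' j) : applyGate g s j = applyGate g s' j := by
  have hsupp : ∀ {i}, i = g.pos ∨ i = g.pos + 1 ∨ i = g.pos + 2 → s i = s' i :=
    fun hi => hg (Finset.mem_coe.2 (Gate.mem_support.2 hi))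
  simp only [applyGate, hsupp (Or.inl rfl), hsupp (Or.inr (Or.inl rfl)),
    hsupp (Or.inr (Or.inr rfl)), hj]

theorem ValidLayer.length_filter_straddles_le_one {L : Layer} (hL : ValidLayer L) (W : ℕ) :
    (L.filter (fun g => decide (Straddles W g))).length ≤ 1 := by
  have hW : ∀ g ∈ L.filter (fun g => decide (Straddles W g)), W ∈ g.support := by
    intro g hg
    obtain ⟨hlt, hle⟩ := of_decide_eq_true (List.mem_filter.mp hg).2
    rw [Gate.mem_support]; omega
  have hpw := hL.filter (fun g => decide (Straddles W g))
  rcases hF : L.filter (fun g => decide (Straddles W g)) with _ | ⟨a, _ | ⟨b, _⟩⟩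
  · simp
  · simp
  · rw [hF] at hW hpw
    exact absurd (hW b (by simp)) <| Finset.disjoint_left.mp
      (List.rel_of_pairwise_cons hpw (by simp)) (hW a (by simp))

theorem ValidLayer.eqOn_applyLayer {L : Layer} (hL : ValidLayer L) {A : Set ℕ}
    {s s' : ℕ → ZMod 2} (hA : EqOn s s' A)
    (hcone : ∀ g ∈ L, ∀ j ∈ g.support, j ∈ A → EqOn s s' g.support) :
    EqOn (applyLayer L s) (applyLayer L s') A := by
  induction L generalizing s s' with
  | nil => exact hA
  | cons g L ih =>
    obtain ⟨hdisj, hL⟩ := List.pairwise_cons.mp hL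
    refine ih (s := applyGate g s) (s' := applyGate g s') hL (fun j hj => ?_)
      (fun h hh k hk hkA i hi => ?_)
    · by_cases hjg : j ∈ g.support
      · exact applyGate_apply_congr (hcone g (by simp) j hjg hj) (hA hj)
      · rw [applyGate_apply_of_notMem hjg, applyGate_apply_of_notMem hjg]
        exact hA hj
    · have hig : i ∉ g.support := Finset.disjoint_right.mp (hdisj h hh) hi
      rw [applyGate_apply_of_notMem hig, applyGate_apply_of_notMem hig]
      exact hcone h (by simp [hh]) k hk hkA hi

theorem ValidLayer.eqOn_applyLayer_Iio {L : Layer} (hL : ValidLayer L) {W : ℕ}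
    {s s' : ℕ → ZMod 2} (h : EqOn s s' (Iio (W + 2))) :
    EqOn (applyLayer L s) (applyLayer L s') (Iio W) :=
  hL.eqOn_applyLayer (h.mono (Iio_subset_Iio (by omega))) fun _ _ j hj hjW i hi => by
    rw [Finset.mem_coe, Gate.mem_support] at hi
    rw [Gate.mem_support] at hj
    exact h (show i < W + 2 by rw [mem_Iio] at hjW; omega)

theorem ValidLayer.eqOn_applyLayer_Ici {L : Layer} (hL : ValidLayer L) {W : ℕ}
    {s s' : ℕ → ZMod 2} (h : EqOn s s' (Ici (W - 2))) :
    EqOn (applyLayer L s) (applyLayer L s') (Ici W) :=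
  hL.eqOn_applyLayer (h.mono (Ici_subset_Ici.2 (by omega))) fun _ _ j hj hjW i hi => by
    rw [Finset.mem_coe, Gate.mem_support] at hi
    rw [Gate.mem_support] at hj
    exact h (show W - 2 ≤ i by rw [mem_Ici] at hjW; omega)

theorem evalCircuit_take_succ (circ : List Layer) (s : ℕ → ZMod 2) (k : ℕ) :
    evalCircuit (circ.take (k + 1)) s =
      applyLayer (circ.getD k []) (evalCircuit (circ.take k) s) := by
  rw [List.take_add_one, List.getD_eq_getElem?_getD]
  cases circ[k]? <;> simp [evalCircuit, List.foldl_append, applyLayer]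

theorem initState_eqOn_Iio (n W : ℕ) (x y y' r : ℕ → ZMod 2) :
    EqOn (initState n W x y r) (initState n W x y' r) (Iio W) := by
  intro i hi
  have : ¬ (W ≤ i ∧ i < W + n) := by rw [mem_Iio] at hi; omega
  simp only [initState, this, if_false]

theorem initState_eqOn_Ici {n W : ℕ} (h : n ≤ W) (x x' y r : ℕ → ZMod 2) :
    EqOn (initState n W x y r) (initState n W x' y r) (Ici W) := by
  intro i hi
  have : ¬ i < n := by rw [mem_Ici] at hi; omega
  simp only [initState, this, if_false]

namespace Protocol

variable (P : Protocol) (x y r : ℕ → ZMod 2)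

def message (m : ℕ) : Bool :=
  if P.speaker m then P.nextA x r (transcript P x y r m) else P.nextB y r (transcript P x y r m)

theorem transcript_succ (m : ℕ) :
    transcript P x y r (m + 1) = transcript P x y r m ++ [P.message x y r m] := rfl

theorem length_transcript (m : ℕ) : (transcript P x y r m).length = m := by
  induction m with
  | zero => rfl
  | succ m ih => simp [transcript_succ, ih]

theorem transcript_isPrefix_transcript {m m' : ℕ} (h : m ≤ m') :
    transcript P x y r m <+: transcript P x y r m' := by
  induction m', h using Nat.le_induction with
  | base => exact List.prefix_refl _
  | succ m' _ ih => exact ih.trans (by rw [transcript_succ]; exact List.prefix_append _ _)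

theorem getD_eq_message {t : List Bool} {m : ℕ} (ht : transcript P x y r (m + 1) <+: t) :
    t.getD m false = P.message x y r m := by
  have hm : m < (transcript P x y r (m + 1)).length := by rw [length_transcript]; omega
  rw [List.getD_eq_getElem _ _ (lt_of_lt_of_le hm ht.length_le), ← ht.getElem hm]
  simp [transcript_succ, length_transcript]

end Protocol

def sideRun (circ : List Layer) (side : Set ℕ) [∀ j, Decidable (j ∈ side)]
    (recv : ℕ → ℕ → ZMod 2) (s : ℕ → ZMod 2) : ℕ → ℕ → ZMod 2
  | 0 => s
  | k + 1 => applyLayer (circ.getD k []) (side.piecewise (sideRun circ side recv s k) (recv k))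

section CutProtocol

variable (n W : ℕ) (circ : List Layer)

/-- Layer `k` is simulated in rounds `4k, …, 4k + 3`, where the values of wires
`W - 2, W - 1, W, W + 1` after `k` layers are announced in this order. -/
def announced (t : List Bool) (k i : ℕ) : ZMod 2 :=
  bitOfBool (t.getD (4 * k + (i + 2 - W)) false)

def aliceRun (x r : ℕ → ZMod 2) (t : List Bool) : ℕ → ℕ → ZMod 2 :=
  sideRun circ (Iio W) (announced W t) (initState n W x 0 r)

def bobRun (y r : ℕ → ZMod 2) (t : List Bool) : ℕ → ℕ → ZMod 2 :=
  sideRun circ (Ici W) (announced W t) (initState n W 0 y r)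

def cutProtocol : Protocol where
  rounds := 4 * circ.length
  speaker m := m % 4 < 2
  nextA x r t := boolOfBit (aliceRun n W circ x r t (t.length / 4) (W + t.length % 4 - 2))
  nextB y r t := boolOfBit (bobRun n W circ y r t (t.length / 4) (W + t.length % 4 - 2))
  outA x r t := aliceRun n W circ x r t circ.length
  outB y r t := bobRun n W circ y r t circ.length

/-- Quantifying over all extensions of the first `4k` rounds makes the invariant apply both to
the partial transcripts from which the messages are computed and to the final one. -/
def CutInvariant (x y r : ℕ → ZMod 2) (k : ℕ) : Prop :=
  ∀ t, transcript (cutProtocol n W circ) x y r (4 * k) <+: t →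
    EqOn (aliceRun n W circ x r t k) (evalCircuit (circ.take k) (initState n W x y r)) (Iio W) ∧
    EqOn (bobRun n W circ y r t k) (evalCircuit (circ.take k) (initState n W x y r)) (Ici W)

variable {n W circ} (x y r : ℕ → ZMod 2)

theorem announced_eq_of_cutInvariant {k : ℕ} (hk : CutInvariant n W circ x y r k)
    {t : List Bool} (ht : transcript (cutProtocol n W circ) x y r (4 * (k + 1)) <+: t)
    {i : ℕ} (hi₁ : W ≤ i + 2) (hi₂ : i < W + 2) :
    announced W t k i = evalCircuit (circ.take k) (initState n W x y r) i := by
  have hsent := hk _ ((cutProtocol n W circ).transcript_isPrefix_transcript x y r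
    (show 4 * k ≤ 4 * k + (i + 2 - W) by omega))
  rw [announced, (cutProtocol n W circ).getD_eq_message x y r
    ((Protocol.transcript_isPrefix_transcript _ x y r (by omega)).trans ht), Protocol.message]
  simp only [cutProtocol, Protocol.length_transcript, decide_eq_true_eq]
  rw [show (4 * k + (i + 2 - W)) / 4 = k by omega,
    show W + (4 * k + (i + 2 - W)) % 4 - 2 = i by omega]
  by_cases hiW : i < W
  · rw [if_pos (by omega), bitOfBool_boolOfBit]
    exact hsent.1 hiW
  · rw [if_neg (by omega), bitOfBool_boolOfBit]
    exact hsent.2 (not_lt.1 hiW)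

theorem cutInvariant_of_forall_validLayer (hcirc : ∀ L ∈ circ, ValidLayer L) (hnW : n ≤ W) (k : ℕ) :
    CutInvariant n W circ x y r k := by
  induction k with
  | zero => exact fun _ _ => ⟨initState_eqOn_Iio n W x 0 y r, initState_eqOn_Ici hnW 0 x y r⟩
  | succ k ih =>
    intro t ht
    obtain ⟨hA, hB⟩ :=
      ih t ((Protocol.transcript_isPrefix_transcript _ x y r (by omega)).trans ht)
    have hvalid : ValidLayer (circ.getD k []) := by
      rcases lt_or_ge k circ.length with hk | hk
      · rw [List.getD_eq_getElem _ _ hk]; exact hcirc _ (List.getElem_mem hk)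
      · rw [List.getD_eq_default _ _ hk]; exact List.Pairwise.nil
    rw [evalCircuit_take_succ]
    constructor
    · refine hvalid.eqOn_applyLayer_Iio fun i hi => ?_
      by_cases hiW : i < W
      · rw [piecewise_eq_of_mem (Iio W) _ _ hiW]; exact hA hiW
      · rw [piecewise_eq_of_notMem (Iio W) _ _ hiW]
        exact announced_eq_of_cutInvariant x y r ih ht (by omega) hi
    · refine hvalid.eqOn_applyLayer_Ici fun i hi => ?_
      by_cases hiW : W ≤ i
      · rw [piecewise_eq_of_mem (Ici W) _ _ hiW]; exact hB hiW
      · rw [piecewise_eq_of_notMem (Ici W) _ _ hiW]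
        exact announced_eq_of_cutInvariant x y r ih ht (by rw [mem_Ici] at hi; omega) (by omega)

end CutProtocol

/-- (1) In a 1D geometrically-local circuit of fan-in-3 gates on contiguous wires, at most one
gate per (valid) layer straddles the horizontal cut.  (2) Consequently, there is a constant
`C` such that any such circuit of depth `d`, acting on a line input of size `n` together with
shared randomness, can be simulated by a two-party randomness-assisted communication protocol
with at most `C * d` bits of communication: Alice outputs the final values of all wires on
her side of the cut and Bob those on his side. -/
theorem oneD_local_circuit_simulation :
    (∀ (W : ℕ) (L : Layer), ValidLayer L →
        (L.filter (fun g => decide (Straddles W g))).length ≤ 1)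
    ∧
    ∃ C : ℕ, ∀ (n W : ℕ) (circ : List Layer),
      (∀ L ∈ circ, ValidLayer L) → n ≤ W →
      ∃ P : Protocol, P.rounds ≤ C * circ.length ∧
        ∀ x y r : ℕ → ZMod 2,
          (∀ i < W, P.outA x r (transcript P x y r P.rounds) i
              = evalCircuit circ (initState n W x y r) i) ∧
          (∀ i, W ≤ i → P.outB y r (transcript P x y r P.rounds) i
              = evalCircuit circ (initState n W x y r) i) := by
  refine ⟨fun W L hL => hL.length_filter_straddles_le_one W, 4,
    fun n W circ hcirc hnW => ⟨cutProtocol n W circ, le_rfl, fun x y r => ?_⟩⟩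
  have hcorrect := cutInvariant_of_forall_validLayer x y r hcirc hnW circ.length _ (List.prefix_refl _)
  rw [List.take_length] at hcorrect
  exact hcorrect
end
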